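/- Let Π be an instance of NotAllEqual 3-SAT with n clauses and G(Π)=(V,E), b, r the associated construction. In every (b,r)-partition of E, for every clause C (original or copy), the number of blue edges among the three edges joining s to U^C equals the number of blue edges among the three matching edges E^C (and likewise for red edges). -/

import Mathlib

/-!
Common definitions for formalizing the NP-completeness reduction from
NotAllEqual 3-SAT to (b,r)-partitions of graphs.

An instance of NotAllEqual 3-SAT with variables in `α` and `n` clauses is
given by `cl : Fin n → Fin 3 → α`, clause `i` consisting of the three
(distinct) variables `cl i 0, cl i 1, cl i 2`.

The vertex set of the associated graph `G(Π)`: the special vertex `s`,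
the `u`-vertices `u i o j` and the `v`-vertices `v i o j`, where `i : Fin n`
is a clause index, `o : Bool` tells whether we are in the gadget of the
original clause (`false`) or of its copy (`true`), and `j : Fin 3` is the
position of a variable inside the clause.
-/

inductive GVert (n : ℕ) : Type
  | s : GVert n
  | u : Fin n → Bool → Fin 3 → GVert n
  | v : Fin n → Bool → Fin 3 → GVert n
  deriving DecidableEq

/-- The occurrences of the variable `x`: the pairs (clause index, position)
where `x` appears. -/
def occs {α : Type*} [DecidableEq α] {n : ℕ} (cl : Fin n → Fin 3 → α) (x : α) :
    Finset (Fin n × Fin 3) :=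
  Finset.univ.filter (fun p => cl p.1 p.2 = x)

/-- The cyclic successor of an occurrence `p` among the occurrences of the
variable sitting at `p`; this is used to build the cycle `Δ_x`. -/
noncomputable def nextOcc {α : Type*} [DecidableEq α] {n : ℕ}
    (cl : Fin n → Fin 3 → α) (p : Fin n × Fin 3) : Fin n × Fin 3 :=
  (occs cl (cl p.1 p.2)).toList.next p (by simp [occs, Finset.mem_toList])

/-- The edges of `G(Π)`: the star at `s`, the triangles on `U^C`, the
matchings `E^C`, and the cycles `Δ_x` (which alternate `v`-vertices of
original-clause gadgets and of copy gadgets; the cycle for the variable `x`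
is `v p₁ false, v p₁ true, v p₂ false, v p₂ true, …` over the occurrences
`p₁, p₂, …` of `x` in cyclic order). -/
inductive EdgeSpec {α : Type*} [DecidableEq α] {n : ℕ} (cl : Fin n → Fin 3 → α) :
    GVert n → GVert n → Prop
  | star (i : Fin n) (o : Bool) (j : Fin 3) : EdgeSpec cl .s (.u i o j)
  | tri (i : Fin n) (o : Bool) {j j' : Fin 3} (h : j ≠ j') :
      EdgeSpec cl (.u i o j) (.u i o j')
  | mat (i : Fin n) (o : Bool) (j : Fin 3) : EdgeSpec cl (.u i o j) (.v i o j)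
  | cycA (p : Fin n × Fin 3) : EdgeSpec cl (.v p.1 false p.2) (.v p.1 true p.2)
  | cycB (p : Fin n × Fin 3) :
      EdgeSpec cl (.v p.1 true p.2) (.v (nextOcc cl p).1 false (nextOcc cl p).2)

/-- The graph `G(Π)` associated to the NotAllEqual 3-SAT instance. -/
noncomputable def gadgetGraph {α : Type*} [DecidableEq α] {n : ℕ}
    (cl : Fin n → Fin 3 → α) : SimpleGraph (GVert n) :=
  SimpleGraph.fromRel (EdgeSpec cl)

/-- The blue outdegree prescription `b`. -/
def bvec (n : ℕ) : GVert n → ℕ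
  | .s => 3 * n
  | .u _ _ _ => 1
  | .v _ o _ => if o then 0 else 1

/-- The red outdegree prescription `r`. -/
def rvec (n : ℕ) : GVert n → ℕ
  | .s => 3 * n
  | .u _ _ _ => 1
  | .v _ o _ => if o then 1 else 0

/-- `dir` is an orientation of the edge set `F`: every directed pair lies in
`F`, and every edge of `F` gets exactly one direction. -/
def IsOrientation {V : Type*} (F : Set (Sym2 V)) (dir : V → V → Prop) : Prop :=
  (∀ a b, dir a b → s(a, b) ∈ F) ∧
    ∀ a b, s(a, b) ∈ F → (dir a b ∨ dir b a) ∧ ¬(dir a b ∧ dir b a)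

/-- `dir` is an `m`-orientation of `F`: an orientation in which exactly `m v`
arcs leave each vertex `v`. -/
def IsMOrientation {V : Type*} (F : Set (Sym2 V)) (m : V → ℕ)
    (dir : V → V → Prop) : Prop :=
  IsOrientation F dir ∧ ∀ v, Nat.card {w // dir v w} = m v

/-- `B` and `R` partition the edges of `G` into two spanning trees. -/
def IsTreePartition {V : Type*} (G B R : SimpleGraph V) : Prop :=
  B ≤ G ∧ R ≤ G ∧ B.IsTree ∧ R.IsTree ∧
    Disjoint B.edgeSet R.edgeSet ∧ B.edgeSet ∪ R.edgeSet = G.edgeSet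

/-- `(B, R)` is a `(b,r)`-partition of (the edge set of) `G`: a partition
into a blue spanning tree having a `b`-orientation and a red spanning tree
having an `r`-orientation. -/
def IsBRPartition {V : Type*} (G : SimpleGraph V) (b r : V → ℕ)
    (B R : SimpleGraph V) : Prop :=
  IsTreePartition G B R ∧
    (∃ d, IsMOrientation B.edgeSet b d) ∧ ∃ d, IsMOrientation R.edgeSet r d

/-- `G` admits some `(b,r)`-partition. -/
def HasBRPartition {V : Type*} (G : SimpleGraph V) (b r : V → ℕ) : Prop :=
  ∃ B R, IsBRPartition G b r B R

/-- The blue/red coloring `c` (`true` = blue, `false` = red) satisfies the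
NotAllEqual 3-SAT instance: every clause contains a blue and a red variable. -/
def NAESatisfies {α : Type*} {n : ℕ} (cl : Fin n → Fin 3 → α) (c : α → Bool) :
    Prop :=
  ∀ i : Fin n, (∃ j, c (cl i j) = true) ∧ ∃ j, c (cl i j) = false

/-- The matching edge `u^C_x v^C_x` at occurrence `p`, in the original gadget
(`o = false`) or the copy gadget (`o = true`). -/
def mEdge {n : ℕ} (p : Fin n × Fin 3) (o : Bool) : Sym2 (GVert n) :=
  s(GVert.u p.1 o p.2, GVert.v p.1 o p.2)

/-!
In both colours `s` has out-degree `3n`, half its degree `6n`, so no arc enters `s`. Hence in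
each colour `X` the out-arcs of `u₀, u₁, u₂` run along three distinct edges of the triangle
`T` or the matching `M`, so `3 ≤ |T ∩ X| + |M ∩ X|`. Summed over the two colours both sides
are `6`, so `|M ∩ X| = 3 - |T ∩ X|`. Acyclicity on the four vertices `s, u₀, u₁, u₂` gives
`|S ∩ X| + |T ∩ X| ≤ 3` for the star `S`, and the same summation forces
`|S ∩ X| = 3 - |T ∩ X| = |M ∩ X|`.
-/

theorem Set.ncard_inter_add_ncard_inter_of_subset_union {β : Type*} {A B R : Set β}
    (hA : A.Finite) (hBR : Disjoint B R) (hABR : A ⊆ B ∪ R) :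
    (A ∩ B).ncard + (A ∩ R).ncard = A.ncard := by
  rw [← Set.ncard_union_eq (hBR.mono Set.inter_subset_right Set.inter_subset_right)
    (hA.inter_of_left B) (hA.inter_of_left R), ← Set.inter_union_distrib_left,
    Set.inter_eq_left.2 hABR]

namespace SimpleGraph

variable {V : Type*} {G : SimpleGraph V}

theorem IsAcyclic.card_edgeFinset_lt [Fintype V] [Nonempty V] [DecidableRel G.Adj]
    (hG : G.IsAcyclic) : G.edgeFinset.card < Fintype.card V := by
  classical
  obtain ⟨T, hGT, -, hT⟩ := connected_top.exists_isTree_le_of_le_of_isAcyclic le_top hG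
  have hcard := hT.card_edgeFinset
  have hle := Finset.card_le_card (edgeFinset_mono hGT)
  omega

theorem IsAcyclic.ncard_edgeSet_inter_sym2_lt [Finite V] (hG : G.IsAcyclic) {s : Set V}
    (hs : s.Nonempty) : (G.edgeSet ∩ s.sym2).ncard < s.ncard := by
  classical
  have := Fintype.ofFinite V
  have := hs.to_subtype
  have hcoe : G.edgeSet ∩ s.sym2 = ↑(G.edgeFinset ∩ s.toFinset.sym2) := by simp
  rw [hcoe, Set.ncard_coe_finset, ← map_edgeFinset_induce, Finset.card_map,
    Set.ncard_eq_toFinset_card', Set.toFinset_card]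
  exact (hG.induce s).card_edgeFinset_lt

end SimpleGraph

namespace IsOrientation

variable {V : Type*} {d : V → V → Prop}

theorem injective_sym2_mk {ι : Type*} {F : Set (Sym2 V)} (hd : IsOrientation F d)
    {f g : ι → V} (hf : Function.Injective f) (hfg : ∀ i, d (f i) (g i)) :
    Function.Injective fun i => s(f i, g i) := by
  intro i j hij
  rcases Sym2.eq_iff.1 hij with ⟨h, -⟩ | ⟨h₁, h₂⟩
  · exact hf h
  · refine absurd ⟨hfg j, ?_⟩ (hd.2 _ _ (hd.1 _ _ (hfg j))).2
    rw [← h₁, ← h₂]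
    exact hfg i

theorem ncard_neighborSet [Finite V] {X : SimpleGraph V} (hd : IsOrientation X.edgeSet d)
    (a : V) : (X.neighborSet a).ncard = {w | d a w}.ncard + {w | d w a}.ncard := by
  have hsplit : X.neighborSet a = {w | d a w} ∪ {w | d w a} := by
    ext w
    refine ⟨fun h => (hd.2 a w h).1, ?_⟩
    rintro (h | h)
    · exact hd.1 a w h
    · exact X.adj_symm (hd.1 w a h)
  rw [hsplit, Set.ncard_union_eq]
  exact Set.disjoint_left.2 fun w h h' => (hd.2 a w (hd.1 a w h)).2 ⟨h, h'⟩

theorem not_dir_of_ncard_add_ncard_eq [Finite V] {G X Y : SimpleGraph V}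
    {dX dY : V → V → Prop} (hdX : IsOrientation X.edgeSet dX)
    (hdY : IsOrientation Y.edgeSet dY) (hXY : Disjoint X.edgeSet Y.edgeSet)
    (hG : X.edgeSet ∪ Y.edgeSet = G.edgeSet) {a : V}
    (ha : {w | dX a w}.ncard + {w | dY a w}.ncard = (G.neighborSet a).ncard) (w : V) :
    ¬dX w a ∧ ¬dY w a := by
  have hsplit : G.neighborSet a = X.neighborSet a ∪ Y.neighborSet a := by
    ext w
    simp only [SimpleGraph.mem_neighborSet, ← SimpleGraph.mem_edgeSet, ← hG, Set.mem_union]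
  have hdisj : Disjoint (X.neighborSet a) (Y.neighborSet a) :=
    Set.disjoint_left.2 fun w hX hY =>
      Set.disjoint_left.1 hXY (X.mem_edgeSet.2 hX) (Y.mem_edgeSet.2 hY)
  rw [hsplit, Set.ncard_union_eq hdisj, hdX.ncard_neighborSet, hdY.ncard_neighborSet] at ha
  have hX : {w | dX w a} = ∅ := (Set.ncard_eq_zero).1 (by omega)
  have hY : {w | dY w a} = ∅ := (Set.ncard_eq_zero).1 (by omega)
  exact ⟨Set.eq_empty_iff_forall_notMem.1 hX w, Set.eq_empty_iff_forall_notMem.1 hY w⟩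

end IsOrientation

theorem IsMOrientation.exists_dir {V : Type*} {F : Set (Sym2 V)} {m : V → ℕ}
    {d : V → V → Prop} (hd : IsMOrientation F m d) {v : V} (hv : 0 < m v) : ∃ w, d v w := by
  rw [← hd.2 v, Nat.card_pos_iff] at hv
  obtain ⟨⟨w, hw⟩⟩ := hv.1
  exact ⟨w, hw⟩

instance (n : ℕ) : Finite (GVert n) :=
  Finite.of_surjective
    (fun x : Option ((Fin n × Bool × Fin 3) ⊕ (Fin n × Bool × Fin 3)) =>
      match x with
      | none => GVert.s
      | some (.inl (i, o, j)) => GVert.u i o j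
      | some (.inr (i, o, j)) => GVert.v i o j)
    (by
      rintro (_ | ⟨i, o, j⟩ | ⟨i, o, j⟩)
      exacts [⟨none, rfl⟩, ⟨some (.inl (i, o, j)), rfl⟩, ⟨some (.inr (i, o, j)), rfl⟩])

section Gadget

variable {α : Type*} [DecidableEq α] {n : ℕ} {cl : Fin n → Fin 3 → α}

def gadgetStar (i : Fin n) (o : Bool) : Set (Sym2 (GVert n)) :=
  {s(GVert.s, GVert.u i o 0), s(GVert.s, GVert.u i o 1), s(GVert.s, GVert.u i o 2)}

def gadgetTriangle (i : Fin n) (o : Bool) : Set (Sym2 (GVert n)) :=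
  {s(GVert.u i o 0, GVert.u i o 1), s(GVert.u i o 0, GVert.u i o 2),
    s(GVert.u i o 1, GVert.u i o 2)}

def gadgetMatching (i : Fin n) (o : Bool) : Set (Sym2 (GVert n)) :=
  {s(GVert.u i o 0, GVert.v i o 0), s(GVert.u i o 1, GVert.v i o 1),
    s(GVert.u i o 2, GVert.v i o 2)}

theorem ncard_gadgetStar (i : Fin n) (o : Bool) : (gadgetStar i o).ncard = 3 :=
  Set.ncard_eq_three.2 ⟨_, _, _, by simp, by simp, by simp, rfl⟩

theorem ncard_gadgetTriangle (i : Fin n) (o : Bool) : (gadgetTriangle i o).ncard = 3 :=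
  Set.ncard_eq_three.2 ⟨_, _, _, by simp, by simp, by simp, rfl⟩

theorem ncard_gadgetMatching (i : Fin n) (o : Bool) : (gadgetMatching i o).ncard = 3 :=
  Set.ncard_eq_three.2 ⟨_, _, _, by simp, by simp, by simp, rfl⟩

theorem gadgetStar_subset_edgeSet (i : Fin n) (o : Bool) :
    gadgetStar i o ⊆ (gadgetGraph cl).edgeSet := by
  simp only [gadgetStar, Set.insert_subset_iff, Set.singleton_subset_iff,
    SimpleGraph.mem_edgeSet, gadgetGraph, SimpleGraph.fromRel_adj]
  exact ⟨⟨by simp, .inl (.star i o 0)⟩, ⟨by simp, .inl (.star i o 1)⟩,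
    ⟨by simp, .inl (.star i o 2)⟩⟩

theorem gadgetTriangle_subset_edgeSet (i : Fin n) (o : Bool) :
    gadgetTriangle i o ⊆ (gadgetGraph cl).edgeSet := by
  simp only [gadgetTriangle, Set.insert_subset_iff, Set.singleton_subset_iff,
    SimpleGraph.mem_edgeSet, gadgetGraph, SimpleGraph.fromRel_adj]
  exact ⟨⟨by simp, .inl (.tri i o (by decide))⟩, ⟨by simp, .inl (.tri i o (by decide))⟩,
    ⟨by simp, .inl (.tri i o (by decide))⟩⟩

theorem gadgetMatching_subset_edgeSet (i : Fin n) (o : Bool) :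
    gadgetMatching i o ⊆ (gadgetGraph cl).edgeSet := by
  simp only [gadgetMatching, Set.insert_subset_iff, Set.singleton_subset_iff,
    SimpleGraph.mem_edgeSet, gadgetGraph, SimpleGraph.fromRel_adj]
  exact ⟨⟨by simp, .inl (.mat i o 0)⟩, ⟨by simp, .inl (.mat i o 1)⟩,
    ⟨by simp, .inl (.mat i o 2)⟩⟩

theorem gadgetGraph_neighborSet_s :
    (gadgetGraph cl).neighborSet GVert.s =
      Set.range fun p : Fin n × Bool × Fin 3 => GVert.u p.1 p.2.1 p.2.2 := by
  ext w
  simp only [SimpleGraph.mem_neighborSet, gadgetGraph, SimpleGraph.fromRel_adj, Set.mem_range]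
  constructor
  · rintro ⟨-, h | h⟩
    · cases h with | star i o j => exact ⟨(i, o, j), rfl⟩
    · cases h
  · rintro ⟨⟨i, o, j⟩, rfl⟩
    exact ⟨by simp, .inl (.star i o j)⟩

theorem ncard_gadgetGraph_neighborSet_s :
    ((gadgetGraph cl).neighborSet GVert.s).ncard = 6 * n := by
  rw [gadgetGraph_neighborSet_s, Set.ncard_range_of_injective]
  · simp only [Nat.card_eq_fintype_card, Fintype.card_prod, Fintype.card_fin, Fintype.card_bool]
    ring
  · rintro ⟨i, o, j⟩ ⟨i', o', j'⟩ h
    simp_all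

theorem gadgetGraph_adj_u {i : Fin n} {o : Bool} {j : Fin 3} {w : GVert n}
    (h : (gadgetGraph cl).Adj (GVert.u i o j) w) :
    w = GVert.s ∨ (∃ k, k ≠ j ∧ w = GVert.u i o k) ∨ w = GVert.v i o j := by
  obtain ⟨-, h | h⟩ := h
  · cases h with
    | tri i o h => exact .inr (.inl ⟨_, h.symm, rfl⟩)
    | mat i o j => exact .inr (.inr rfl)
  · cases h with
    | star i o j => exact .inl rfl
    | tri i o h => exact .inr (.inl ⟨_, h, rfl⟩)

theorem disjoint_gadgetStar_gadgetTriangle (i : Fin n) (o : Bool) :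
    Disjoint (gadgetStar i o) (gadgetTriangle i o) :=
  Set.disjoint_left.2 fun e he he' => by
    simp only [gadgetStar, gadgetTriangle, Set.mem_insert_iff, Set.mem_singleton_iff] at he he'
    rcases he with rfl | rfl | rfl <;> simp at he'

theorem disjoint_gadgetTriangle_gadgetMatching (i : Fin n) (o : Bool) :
    Disjoint (gadgetTriangle i o) (gadgetMatching i o) :=
  Set.disjoint_left.2 fun e he he' => by
    simp only [gadgetTriangle, gadgetMatching, Set.mem_insert_iff, Set.mem_singleton_iff]
      at he he'
    rcases he with rfl | rfl | rfl <;> simp at he'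

theorem ncard_gadgetStar_inter_add_ncard_gadgetTriangle_inter_le {X : SimpleGraph (GVert n)}
    (hX : X.IsAcyclic) (i : Fin n) (o : Bool) :
    (gadgetStar i o ∩ X.edgeSet).ncard + (gadgetTriangle i o ∩ X.edgeSet).ncard ≤ 3 := by
  set W : Set (GVert n) := {GVert.s, GVert.u i o 0, GVert.u i o 1, GVert.u i o 2}
  have hW : W.ncard = 4 := by simp [W, Set.ncard_insert_of_notMem]
  have hsub : (gadgetStar i o ∪ gadgetTriangle i o) ∩ X.edgeSet ⊆ X.edgeSet ∩ W.sym2 := by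
    rintro e ⟨he, heX⟩
    refine ⟨heX, ?_⟩
    simp only [gadgetStar, gadgetTriangle, Set.mem_union, Set.mem_insert_iff,
      Set.mem_singleton_iff] at he
    rcases he with (rfl | rfl | rfl) | rfl | rfl | rfl <;> simp [W]
  have hlt := hX.ncard_edgeSet_inter_sym2_lt (s := W) ⟨_, Set.mem_insert _ _⟩
  have hle := Set.ncard_le_ncard hsub
  rw [Set.union_inter_distrib_right, Set.ncard_union_eq
    ((disjoint_gadgetStar_gadgetTriangle i o).mono Set.inter_subset_left
      Set.inter_subset_left)] at hle
  omega

theorem three_le_ncard_gadgetTriangle_inter_add_ncard_gadgetMatching_inter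
    {X : SimpleGraph (GVert n)} (hXG : X ≤ gadgetGraph cl) {d : GVert n → GVert n → Prop}
    (hd : IsOrientation X.edgeSet d) (hs : ∀ w, ¬d w GVert.s) (i : Fin n) (o : Bool)
    (hout : ∀ j, ∃ w, d (GVert.u i o j) w) :
    3 ≤ (gadgetTriangle i o ∩ X.edgeSet).ncard + (gadgetMatching i o ∩ X.edgeSet).ncard := by
  choose w hw using hout
  have hinj := hd.injective_sym2_mk (f := fun j => GVert.u i o j)
    (fun j k h => by simpa using h) hw
  have hmem : ∀ j,
      s(GVert.u i o j, w j) ∈ (gadgetTriangle i o ∪ gadgetMatching i o) ∩ X.edgeSet := by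
    intro j
    refine ⟨?_, hd.1 _ _ (hw j)⟩
    rcases gadgetGraph_adj_u (hXG (X.mem_edgeSet.1 (hd.1 _ _ (hw j)))) with h | ⟨k, hk, h⟩ | h
    · exact absurd (h ▸ hw j) (hs _)
    · left
      rw [h]
      fin_cases j <;> fin_cases k <;> simp_all [gadgetTriangle, Sym2.eq_swap]
    · right
      rw [h]
      fin_cases j <;> simp [gadgetMatching]
  calc 3 = (Set.univ : Set (Fin 3)).ncard := by simp
    _ ≤ ((gadgetTriangle i o ∪ gadgetMatching i o) ∩ X.edgeSet).ncard :=
      Set.ncard_le_ncard_of_injOn _ (fun j _ => hmem j) hinj.injOn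
    _ = _ := by
      rw [Set.union_inter_distrib_right, Set.ncard_union_eq
        ((disjoint_gadgetTriangle_gadgetMatching i o).mono Set.inter_subset_left
          Set.inter_subset_left)]

end Gadget

theorem stmt10_general {α : Type*} [DecidableEq α] {n : ℕ} (cl : Fin n → Fin 3 → α)
    (B R : SimpleGraph (GVert n))
    (hBR : IsBRPartition (gadgetGraph cl) (bvec n) (rvec n) B R) :
    ∀ (i : Fin n) (o : Bool),
      (({s(GVert.s, GVert.u i o 0), s(GVert.s, GVert.u i o 1),
          s(GVert.s, GVert.u i o 2)} :
          Set (Sym2 (GVert n))) ∩ B.edgeSet).ncard =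
        (({s(GVert.u i o 0, GVert.v i o 0), s(GVert.u i o 1, GVert.v i o 1),
            s(GVert.u i o 2, GVert.v i o 2)} :
            Set (Sym2 (GVert n))) ∩ B.edgeSet).ncard ∧
      (({s(GVert.s, GVert.u i o 0), s(GVert.s, GVert.u i o 1),
          s(GVert.s, GVert.u i o 2)} :
          Set (Sym2 (GVert n))) ∩ R.edgeSet).ncard =
        (({s(GVert.u i o 0, GVert.v i o 0), s(GVert.u i o 1, GVert.v i o 1),
            s(GVert.u i o 2, GVert.v i o 2)} :
            Set (Sym2 (GVert n))) ∩ R.edgeSet).ncard := by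
  obtain ⟨⟨hBG, hRG, hB, hR, hdisj, hunion⟩, ⟨dB, hdB⟩, ⟨dR, hdR⟩⟩ := hBR
  have hsource : ∀ w, ¬dB w GVert.s ∧ ¬dR w GVert.s := by
    refine hdB.1.not_dir_of_ncard_add_ncard_eq hdR.1 hdisj hunion ?_
    change Nat.card {w // dB _ w} + Nat.card {w // dR _ w} = _
    rw [hdB.2, hdR.2, ncard_gadgetGraph_neighborSet_s, bvec, rvec]
    ring
  intro i o
  have hSTB := ncard_gadgetStar_inter_add_ncard_gadgetTriangle_inter_le hB.2 i o
  have hSTR := ncard_gadgetStar_inter_add_ncard_gadgetTriangle_inter_le hR.2 i o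
  have hTMB := three_le_ncard_gadgetTriangle_inter_add_ncard_gadgetMatching_inter hBG hdB.1
    (fun w => (hsource w).1) i o fun _ => hdB.exists_dir (by simp [bvec])
  have hTMR := three_le_ncard_gadgetTriangle_inter_add_ncard_gadgetMatching_inter hRG hdR.1
    (fun w => (hsource w).2) i o fun _ => hdR.exists_dir (by simp [rvec])
  have hsplit {A : Set (Sym2 (GVert n))} (hA : A ⊆ (gadgetGraph cl).edgeSet) :=
    Set.ncard_inter_add_ncard_inter_of_subset_union (Set.toFinite A) hdisj (hunion ▸ hA)
  have hS := (hsplit (gadgetStar_subset_edgeSet i o)).trans (ncard_gadgetStar i o)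
  have hT := (hsplit (gadgetTriangle_subset_edgeSet i o)).trans (ncard_gadgetTriangle i o)
  have hM := (hsplit (gadgetMatching_subset_edgeSet i o)).trans (ncard_gadgetMatching i o)
  change (gadgetStar i o ∩ B.edgeSet).ncard = (gadgetMatching i o ∩ B.edgeSet).ncard ∧
    (gadgetStar i o ∩ R.edgeSet).ncard = (gadgetMatching i o ∩ R.edgeSet).ncard
  omega

/-- In every `(b,r)`-partition of `G(Π)`, for every clause
gadget (original or copy), the number of blue edges among the three edges
joining `s` to `U^C` equals the number of blue edges in the matching `E^C`,
and likewise for red edges. -/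
theorem stmt10 {α : Type*} [DecidableEq α] {n : ℕ} (cl : Fin n → Fin 3 → α)
    (hcl : ∀ i, Function.Injective (cl i)) (B R : SimpleGraph (GVert n))
    (hBR : IsBRPartition (gadgetGraph cl) (bvec n) (rvec n) B R) :
    ∀ (i : Fin n) (o : Bool),
      (({s(GVert.s, GVert.u i o 0), s(GVert.s, GVert.u i o 1),
          s(GVert.s, GVert.u i o 2)} :
          Set (Sym2 (GVert n))) ∩ B.edgeSet).ncard =
        (({s(GVert.u i o 0, GVert.v i o 0), s(GVert.u i o 1, GVert.v i o 1),
            s(GVert.u i o 2, GVert.v i o 2)} :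
            Set (Sym2 (GVert n))) ∩ B.edgeSet).ncard ∧
      (({s(GVert.s, GVert.u i o 0), s(GVert.s, GVert.u i o 1),
          s(GVert.s, GVert.u i o 2)} :
          Set (Sym2 (GVert n))) ∩ R.edgeSet).ncard =
        (({s(GVert.u i o 0, GVert.v i o 0), s(GVert.u i o 1, GVert.v i o 1),
            s(GVert.u i o 2, GVert.v i o 2)} :
            Set (Sym2 (GVert n))) ∩ R.edgeSet).ncard :=
  stmt10_general cl B R hBR
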